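/- Let ψ(t) denote the derivative at t of the function s ↦ log Γ(s), where Γ is the real Gamma function. For all real α, β > 0: (1/B(α,β)) · ∫₀¹ (log x) · x^(α−1)(1−x)^(β−1) dx = ψ(α) − ψ(α+β), and (1/B(α,β)) · ∫₀¹ (log(1−x)) · x^(α−1)(1−x)^(β−1) dx = ψ(β) − ψ(α+β). That is, for φ ∼ Beta(α,β), E[log φ] = ψ(α) − ψ(α+β) and E[log(1−φ)] = ψ(β) − ψ(α+β). -/

import Mathlib

open Real MeasureTheory Set Filter intervalIntegral
open scoped Topology Interval

lemma beta_integrable (a b : ℝ) (ha : 0 < a) (hb : 0 < b) :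
    IntervalIntegrable (fun x : ℝ => x ^ (a - 1) * (1 - x) ^ (b - 1)) volume 0 1 := by
  have h := Complex.betaIntegral_convergent (u := (a : ℂ)) (v := (b : ℂ)) (by simpa) (by simpa)
  rw [intervalIntegrable_iff] at h ⊢
  refine h.re.congr ?_
  rw [uIoc_of_le (zero_le_one' ℝ)]
  filter_upwards [ae_restrict_mem measurableSet_Ioc] with x hx
  have hx0 : (0:ℝ) ≤ x := hx.1.le
  have hx1 : (0:ℝ) ≤ 1 - x := by linarith [hx.2]
  have heq : ((x:ℂ) ^ ((a:ℂ) - 1) * ((1:ℂ) - x) ^ ((b:ℂ) - 1)) =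
      ((x ^ (a - 1) * (1 - x) ^ (b - 1) : ℝ) : ℂ) := by
    rw [Complex.ofReal_mul, Complex.ofReal_cpow hx0, Complex.ofReal_cpow hx1]
    push_cast
    ring
  simp [heq]

lemma beta_eq (a b : ℝ) (ha : 0 < a) (hb : 0 < b) :
    (∫ x in (0:ℝ)..1, x ^ (a - 1) * (1 - x) ^ (b - 1)) =
      Real.Gamma a * Real.Gamma b / Real.Gamma (a + b) := by
  have h := Complex.Gamma_mul_Gamma_eq_betaIntegral (s := (a : ℂ)) (t := (b : ℂ))
    (by simpa) (by simpa)
  have hbeta : Complex.betaIntegral a b =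
      ((∫ x in (0:ℝ)..1, x ^ (a - 1) * (1 - x) ^ (b - 1) : ℝ) : ℂ) := by
    rw [Complex.betaIntegral, ← intervalIntegral.integral_ofReal]
    refine intervalIntegral.integral_congr fun x hx => ?_
    rw [uIcc_of_le (zero_le_one' ℝ)] at hx
    have hx0 : (0:ℝ) ≤ x := hx.1
    have hx1 : (0:ℝ) ≤ 1 - x := by linarith [hx.2]
    rw [Complex.ofReal_mul, Complex.ofReal_cpow hx0, Complex.ofReal_cpow hx1]
    push_cast
    ring
  rw [hbeta, ← Complex.ofReal_add, Complex.Gamma_ofReal, Complex.Gamma_ofReal,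
    Complex.Gamma_ofReal, ← Complex.ofReal_mul, ← Complex.ofReal_mul] at h
  have h2 : Real.Gamma a * Real.Gamma b =
      Real.Gamma (a + b) * ∫ x in (0:ℝ)..1, x ^ (a - 1) * (1 - x) ^ (b - 1) := by
    exact_mod_cast h
  have hne : Real.Gamma (a + b) ≠ 0 := (Real.Gamma_pos_of_pos (by linarith)).ne'
  rw [eq_div_iff hne]
  linear_combination -h2

lemma log_mul_le (c : ℝ) (hc : 0 < c) {x : ℝ} (hx : 0 < x) (hx1 : x ≤ 1) :
    |Real.log x| * x ^ (c - 1) ≤ (2 / c) * x ^ (c / 2 - 1) := by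
  have hlx : Real.log x ≤ 0 := Real.log_nonpos hx.le hx1
  have habs : |Real.log x| = -Real.log x := abs_of_nonpos hlx
  have h1 : -Real.log x ≤ (2 / c) * x ^ (-(c / 2)) := by
    have := Real.log_le_sub_one_of_pos (Real.rpow_pos_of_pos hx (-(c/2)))
    rw [Real.log_rpow hx] at this
    have hxp : (0:ℝ) < x ^ (-(c/2)) := Real.rpow_pos_of_pos hx _
    have h1' : c * (-Real.log x) ≤ 2 * x ^ (-(c/2)) := by linarith
    rw [div_mul_eq_mul_div, le_div_iff₀ hc]
    linarith
  calc |Real.log x| * x ^ (c - 1) ≤ ((2 / c) * x ^ (-(c / 2))) * x ^ (c - 1) := by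
        rw [habs]
        exact mul_le_mul_of_nonneg_right h1 (Real.rpow_nonneg hx.le _)
    _ = (2 / c) * x ^ (c / 2 - 1) := by
        rw [mul_assoc, ← Real.rpow_add hx]
        ring_nf

lemma beta_main (ψ : ℝ → ℝ) (hψ : ∀ t : ℝ, ψ t = deriv (fun s => Real.log (Real.Gamma s)) t)
    (α β : ℝ) (hα : 0 < α) (hβ : 0 < β) :
    (1 / ∫ x in (0:ℝ)..1, x ^ (α - 1) * (1 - x) ^ (β - 1)) *
        (∫ x in (0:ℝ)..1, Real.log x * (x ^ (α - 1) * (1 - x) ^ (β - 1))) =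
      ψ α - ψ (α + β) := by
  have hΓ : ∀ t : ℝ, 0 < t → HasDerivAt Real.Gamma (deriv Real.Gamma t) t := fun t ht =>
    (Real.differentiableAt_Gamma fun m =>
      ne_of_gt (lt_of_le_of_lt (neg_nonpos.mpr m.cast_nonneg) ht)).hasDerivAt
  have hψval : ∀ t : ℝ, 0 < t → ψ t = deriv Real.Gamma t / Real.Gamma t := by
    intro t ht
    rw [hψ t]
    exact ((hΓ t ht).log (Real.Gamma_pos_of_pos ht).ne').deriv
  -- derivative under the integral sign
  have hconts : ∀ a : ℝ, ContinuousOn (fun x : ℝ => x ^ (a - 1) * (1 - x) ^ (β - 1))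
      (Ioo (0:ℝ) 1) := by
    intro a
    apply ContinuousOn.mul
    · exact continuousOn_id.rpow_const fun x hx => Or.inl (ne_of_gt hx.1)
    · exact (continuous_const.sub continuous_id).continuousOn.rpow_const
        fun x hx => Or.inl (by intro h; simp only [Pi.sub_apply, id] at h; nlinarith [hx.2])
  have haesm : ∀ f : ℝ → ℝ, ContinuousOn f (Ioo (0:ℝ) 1) →
      AEStronglyMeasurable f (volume.restrict (Ι (0:ℝ) 1)) := by
    intro f hf
    rw [uIoc_of_le (zero_le_one' ℝ), ← MeasureTheory.restrict_Ioo_eq_restrict_Ioc]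
    exact hf.aestronglyMeasurable measurableSet_Ioo
  have hmeas : ∀ a : ℝ, AEStronglyMeasurable (fun x : ℝ => x ^ (a - 1) * (1 - x) ^ (β - 1))
      (volume.restrict (Ι (0:ℝ) 1)) := fun a => haesm _ (hconts a)
  have key := intervalIntegral.hasDerivAt_integral_of_dominated_loc_of_deriv_le
      (F := fun (a : ℝ) (x : ℝ) => x ^ (a - 1) * (1 - x) ^ (β - 1))
      (F' := fun (a : ℝ) (x : ℝ) => Real.log x * (x ^ (a - 1) * (1 - x) ^ (β - 1)))
      (x₀ := α) (s := Metric.ball α (α / 2)) (a := 0) (b := 1) (μ := volume)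
      (bound := fun x : ℝ => (4 / α) * (x ^ (α / 4 - 1) * (1 - x) ^ (β - 1)))
      (Metric.ball_mem_nhds _ (by positivity))
      (Eventually.of_forall fun a => hmeas a)
      (beta_integrable α β hα hβ)
      (haesm _ ((continuousOn_id.log fun x hx => ne_of_gt hx.1).mul (hconts α)))
      ?_ ?_ ?_
  · -- Gamma-side derivative
    set g := deriv Real.Gamma with hg
    have hΓαβ : (0:ℝ) < α + β := by linarith
    have h1 : HasDerivAt (fun a : ℝ => Real.Gamma a * Real.Gamma β)
        (g α * Real.Gamma β) α := (hΓ α hα).mul_const _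
    have h2 : HasDerivAt (fun a : ℝ => Real.Gamma (a + β)) (g (α + β)) α := by
      have := (hΓ (α + β) hΓαβ).comp α ((hasDerivAt_id α).add_const β)
      rw [mul_one] at this
      exact this
    have hG : HasDerivAt (fun a : ℝ => Real.Gamma a * Real.Gamma β / Real.Gamma (a + β))
        ((g α * Real.Gamma β * Real.Gamma (α + β) -
          Real.Gamma α * Real.Gamma β * g (α + β)) / Real.Gamma (α + β) ^ 2) α :=
      h1.div h2 (Real.Gamma_pos_of_pos hΓαβ).ne'
    have hFG : (fun a : ℝ => ∫ x in (0:ℝ)..1, x ^ (a - 1) * (1 - x) ^ (β - 1)) =ᶠ[𝓝 α]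
        (fun a : ℝ => Real.Gamma a * Real.Gamma β / Real.Gamma (a + β)) := by
      filter_upwards [eventually_gt_nhds hα] with a ha using beta_eq a β ha hβ
    have hG' := key.2.congr_of_eventuallyEq hFG.symm
    have hID := hG'.unique hG
    rw [beta_eq α β hα hβ, hID, hψval α hα, hψval (α + β) hΓαβ]
    have hA := (Real.Gamma_pos_of_pos hα).ne'
    have hB := (Real.Gamma_pos_of_pos hβ).ne'
    have hC := (Real.Gamma_pos_of_pos hΓαβ).ne'
    field_simp
  · -- bound
    rw [uIoc_of_le (zero_le_one' ℝ)]
    refine Eventually.of_forall fun x hx a ha => ?_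
    have hx0 : (0:ℝ) < x := hx.1
    have hx1 : x ≤ 1 := hx.2
    have h1x : (0:ℝ) ≤ 1 - x := by linarith
    have hae : α / 2 - 1 ≤ a - 1 := by
      rw [Metric.mem_ball, Real.dist_eq, abs_lt] at ha
      linarith [ha.1]
    have hxa : x ^ (a - 1) ≤ x ^ (α / 2 - 1) :=
      Real.rpow_le_rpow_of_exponent_ge hx0 hx1 hae
    have hlog := log_mul_le (α / 2) (by positivity) hx0 hx1
    have hnn : (0:ℝ) ≤ (1 - x) ^ (β - 1) := Real.rpow_nonneg h1x _
    have hrw : ‖Real.log x * (x ^ (a - 1) * (1 - x) ^ (β - 1))‖ =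
        |Real.log x| * x ^ (a - 1) * (1 - x) ^ (β - 1) := by
      rw [Real.norm_eq_abs, abs_mul, abs_mul, abs_of_nonneg (Real.rpow_nonneg hx0.le _),
        abs_of_nonneg hnn, mul_assoc]
    rw [hrw]
    calc |Real.log x| * x ^ (a - 1) * (1 - x) ^ (β - 1)
        ≤ |Real.log x| * x ^ (α / 2 - 1) * (1 - x) ^ (β - 1) := by
          apply mul_le_mul_of_nonneg_right _ hnn
          exact mul_le_mul_of_nonneg_left hxa (abs_nonneg _)
      _ ≤ ((2 / (α / 2)) * x ^ (α / 2 / 2 - 1)) * (1 - x) ^ (β - 1) :=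
          mul_le_mul_of_nonneg_right hlog hnn
      _ = (4 / α) * (x ^ (α / 4 - 1) * (1 - x) ^ (β - 1)) := by
          rw [show (2 : ℝ) / (α / 2) = 4 / α by ring, show α / 2 / 2 = α / 4 by ring]
          ring
  · -- bound integrable
    exact (beta_integrable (α / 4) β (by positivity) hβ).const_mul _
  · -- differentiability
    rw [uIoc_of_le (zero_le_one' ℝ)]
    refine Eventually.of_forall fun x hx a _ => ?_
    have hx0 : (0:ℝ) < x := hx.1
    have h0 : HasDerivAt (fun t : ℝ => x ^ t) (x ^ (a - 1) * Real.log x) (a - 1) :=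
      (Real.hasStrictDerivAt_const_rpow hx0 (a - 1)).hasDerivAt
    have h1 : HasDerivAt (fun t : ℝ => x ^ (t - 1)) (x ^ (a - 1) * Real.log x * 1) a :=
      h0.comp a ((hasDerivAt_id a).sub_const 1)
    have h2 := h1.mul_const ((1 - x) ^ (β - 1))
    convert h2 using 1
    · rfl
    ring

/-- For `φ ∼ Beta(α,β)` with `α, β > 0`: `E[log φ] = ψ(α) - ψ(α+β)` and
`E[log(1-φ)] = ψ(β) - ψ(α+β)`, where `ψ` is the digamma function, the derivative
of `log ∘ Γ`, and `B(α,β) = ∫₀¹ x^(α-1)(1-x)^(β-1) dx`. -/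
theorem beta_expected_log (ψ : ℝ → ℝ) (hψ : ∀ t : ℝ, ψ t = deriv (fun s => Real.log (Real.Gamma s)) t)
    (α β : ℝ) (hα : 0 < α) (hβ : 0 < β) :
    (1 / ∫ x in (0:ℝ)..1, x ^ (α - 1) * (1 - x) ^ (β - 1)) *
        (∫ x in (0:ℝ)..1, Real.log x * (x ^ (α - 1) * (1 - x) ^ (β - 1))) =
      ψ α - ψ (α + β) ∧
    (1 / ∫ x in (0:ℝ)..1, x ^ (α - 1) * (1 - x) ^ (β - 1)) *
        (∫ x in (0:ℝ)..1, Real.log (1 - x) * (x ^ (α - 1) * (1 - x) ^ (β - 1))) =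
      ψ β - ψ (α + β) := by
  refine ⟨beta_main ψ hψ α β hα hβ, ?_⟩
  have h1 : (∫ x in (0:ℝ)..1, x ^ (α - 1) * (1 - x) ^ (β - 1)) =
      ∫ x in (0:ℝ)..1, x ^ (β - 1) * (1 - x) ^ (α - 1) := by
    have := intervalIntegral.integral_comp_sub_left (a := (0:ℝ)) (b := 1)
      (fun x : ℝ => x ^ (β - 1) * (1 - x) ^ (α - 1)) 1
    simp only [sub_sub_cancel, sub_zero, sub_self] at this
    rw [← this]
    refine intervalIntegral.integral_congr fun x _ => ?_
    ring
  have h2 : (∫ x in (0:ℝ)..1, Real.log (1 - x) * (x ^ (α - 1) * (1 - x) ^ (β - 1))) =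
      ∫ x in (0:ℝ)..1, Real.log x * (x ^ (β - 1) * (1 - x) ^ (α - 1)) := by
    have := intervalIntegral.integral_comp_sub_left (a := (0:ℝ)) (b := 1)
      (fun x : ℝ => Real.log x * (x ^ (β - 1) * (1 - x) ^ (α - 1))) 1
    simp only [sub_sub_cancel, sub_zero, sub_self] at this
    rw [← this]
    refine intervalIntegral.integral_congr fun x _ => ?_
    ring
  rw [h1, h2, show α + β = β + α by ring]
  exact beta_main ψ hψ β α hβ hα
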